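/- arXiv:2007.09705 — 3 statements merged into one kernel-verified Lean document; each statement's English description precedes it below -/
import Mathlib

section
/- For every natural number i, the set S_i of the greedy partition of the natural numbers into 3-free sequences is nonempty, and its least element equals the base-3 value of the base-3/2 representation of 2i. (Equivalently: the Stanley cross-sequence, whose i-th term is the first term of S_i, written in base 3 is the same as the sequence of even non-negative integers written in base 3/2.) -/
abbrev Digit := Fin 3

/-- Base-3 value of a digit string (most significant digit first). -/
def val3 (w : List Digit) : ℕ := w.foldl (fun acc d => 3 * acc + d.val) 0

/-- Base-3/2 representation of a natural number via `rep`: `rep 0` is the empty string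
and `rep N = rep (2 * (N - N % 3) / 3) ++ [N % 3]` for `N > 0`. -/
def rep32 : ℕ → List Digit
  | 0 => []
  | n + 1 => rep32 (2 * ((n + 1) / 3)) ++ [(Fin.ofNat 3 ((n + 1) % 3 : ℕ) : Digit)]
decreasing_by omega

/-- The base-3/2 representation `(N)_{3/2}`, with `(0)_{3/2}` the single digit 0. -/
def baseThreeHalves (N : ℕ) : List Digit := if N = 0 then [0] else rep32 N

/-- The greedy labeling of the natural numbers into 3-free sequences:
`stanleyLabel n` is the least label `i` such that there are no `u < v < n` with
`stanleyLabel u = stanleyLabel v = i` and `u + n = 2 * v`. The `i`-th sequence of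
the greedy partition is `S_i = {n | stanleyLabel n = i}`. -/
noncomputable def stanleyLabel : ℕ → ℕ
  | n => sInf {i | ∀ u v : ℕ, u < v → v < n →
      stanleyLabel u = i → stanleyLabel v = i → u + n ≠ 2 * v}
termination_by n => n
decreasing_by all_goals omega


/-!
The greedy labeling has the closed form `g n = (3 * g (n / 3) + n % 3) / 2`: the ternary digits of
`n` are read in base 3/2, rounding down after each digit. Its fibers are 3-free: for a progression
inside the fiber of `k`, the three numbers `3 * g (n / 3) + n % 3` lie in `{2k, 2k + 1}` and are
congruent to the last digits, which forces equal last digits and lets one descend to `n / 3`.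
Conversely every label `k < g q` is blocked by a progression `u < v < q` in the fiber of `k`,
obtained by appending ternary digits to a progression for `q / 3`; the induction carries two
companion shapes of near-progressions. Hence `g` is the greedy labeling. Finally the base-3 value
of `(N)_{3/2}` is strictly increasing in `N` and has label `N / 2`, and a digit-by-digit comparison
shows that the value of `(2 * g n)_{3/2}` is at most `n`.
-/

def ternaryLabel : ℕ → ℕ
  | 0 => 0
  | n + 1 => (3 * ternaryLabel ((n + 1) / 3) + (n + 1) % 3) / 2

lemma ternaryLabel_zero : ternaryLabel 0 = 0 := by
  rw [ternaryLabel]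

lemma ternaryLabel_eq (n : ℕ) : ternaryLabel n = (3 * ternaryLabel (n / 3) + n % 3) / 2 := by
  cases n with
  | zero => simp [ternaryLabel_zero]
  | succ m => rw [ternaryLabel]

lemma ternaryLabel_three_mul_add {x : ℕ} (a : ℕ) (hx : x < 3) :
    ternaryLabel (3 * a + x) = (3 * ternaryLabel a + x) / 2 := by
  rw [ternaryLabel_eq, show (3 * a + x) / 3 = a by omega, show (3 * a + x) % 3 = x by omega]

lemma eq_of_add_mod_three_eq {m p q r : ℕ} (hp : p = m ∨ p = m + 1) (hq : q = m ∨ q = m + 1)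
    (hr : r = m ∨ r = m + 1) (h : (p + r) % 3 = 2 * q % 3) : p = q ∧ r = q := by
  rcases hp with rfl | rfl <;> rcases hq with rfl | rfl <;> rcases hr with rfl | rfl <;> omega

lemma eq_of_add_eq_add_of_ternaryLabel_eq {a b c : ℕ} (hab : ternaryLabel a = ternaryLabel b)
    (hcb : ternaryLabel c = ternaryLabel b) (habc : a + c = b + b) : a = b := by
  induction hn : a + c using Nat.strong_induction_on generalizing a b c with
  | _ n ih =>
    rcases Nat.eq_zero_or_pos n with rfl | hpos
    · omega
    have ha := ternaryLabel_eq a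
    have hb := ternaryLabel_eq b
    have hc := ternaryLabel_eq c
    obtain ⟨hpq, hrq⟩ := eq_of_add_mod_three_eq (m := 2 * ternaryLabel b)
      (p := 3 * ternaryLabel (a / 3) + a % 3) (q := 3 * ternaryLabel (b / 3) + b % 3)
      (r := 3 * ternaryLabel (c / 3) + c % 3) (by omega) (by omega) (by omega) (by omega)
    have := ih (a / 3 + c / 3) (by omega) (a := a / 3) (b := b / 3) (c := c / 3)
      (by omega) (by omega) (by omega) rfl
    omega

theorem threeAPFree_ternaryLabel_preimage (k : ℕ) : ThreeAPFree (ternaryLabel ⁻¹' {k}) :=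
  fun _ ha _ hb _ hc habc =>
    eq_of_add_eq_add_of_ternaryLabel_eq (ha.trans hb.symm) (hc.trans hb.symm) habc

theorem stanleyLabel_eq_of_threeAPFree {f : ℕ → ℕ} (hfree : ∀ k, ThreeAPFree (f ⁻¹' {k}))
    (hblocked : ∀ n, ∀ k < f n,
      ∃ u v, u < v ∧ v < n ∧ f u = k ∧ f v = k ∧ u + n = 2 * v) :
    stanleyLabel = f := by
  funext n
  induction n using Nat.strong_induction_on with
  | _ n ih =>
    rw [stanleyLabel]
    set S := {i | ∀ u v : ℕ, u < v → v < n → f u = i → f v = i → u + n ≠ 2 * v}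
    have hS : {i | ∀ u v : ℕ, u < v → v < n →
        stanleyLabel u = i → stanleyLabel v = i → u + n ≠ 2 * v} = S := by
      ext i
      refine forall₂_congr fun u v => forall₂_congr fun huv hvn => ?_
      rw [ih u (by omega), ih v hvn]
    have hmem : f n ∈ S := fun u v huv _ hu hv hsum =>
      huv.ne (hfree (f n) hu hv rfl (by omega))
    rw [hS]
    refine le_antisymm (Nat.sInf_le hmem) (le_csInf ⟨_, hmem⟩ fun k hk => ?_)
    by_contra! hlt
    obtain ⟨u, v, huv, hvn, hu, hv, hsum⟩ := hblocked n k hlt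
    exact hk u v huv hvn hu hv hsum

lemma rep32_zero : rep32 0 = [] := by
  rw [rep32]

lemma val3_rep32_of_ne_zero {N : ℕ} (hN : N ≠ 0) :
    val3 (rep32 N) = 3 * val3 (rep32 (2 * (N / 3))) + N % 3 := by
  obtain ⟨n, rfl⟩ := Nat.exists_eq_succ_of_ne_zero hN
  rw [rep32, val3, List.foldl_append]
  simp [val3]

lemma val3_baseThreeHalves (N : ℕ) : val3 (baseThreeHalves N) = val3 (rep32 N) := by
  unfold baseThreeHalves
  split_ifs with h
  · subst h
    rw [rep32_zero]
    rfl
  · rfl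

lemma ternaryLabel_val3_rep32 (N : ℕ) : ternaryLabel (val3 (rep32 N)) = N / 2 := by
  induction N using Nat.strong_induction_on with
  | _ N ih =>
    rcases Nat.eq_zero_or_pos N with rfl | hN
    · rw [rep32_zero]
      exact ternaryLabel_zero
    · rw [val3_rep32_of_ne_zero hN.ne', ternaryLabel_three_mul_add _ (Nat.mod_lt _ (by norm_num)),
        ih _ (by omega)]
      omega

lemma strictMono_val3_rep32 : StrictMono fun N => val3 (rep32 N) := by
  refine strictMono_nat_of_lt_succ fun N => ?_
  induction N using Nat.strong_induction_on with
  | _ N ih =>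
    have hsucc := val3_rep32_of_ne_zero (N := N + 1) (by omega)
    rcases Nat.eq_zero_or_pos N with rfl | hN
    · simp only [val3, zero_add, Nat.reduceDiv, mul_zero, rep32_zero, List.foldl_nil,
        Nat.one_mod, gt_iff_lt] at hsucc ⊢
      omega
    have hN' := val3_rep32_of_ne_zero hN.ne'
    by_cases h2 : N % 3 = 2
    · have h₁ := ih (2 * (N / 3)) (by omega)
      have h₂ := ih (2 * (N / 3) + 1) (by omega)
      rw [show 2 * (N / 3) + 1 + 1 = 2 * ((N + 1) / 3) by omega] at h₂
      omega
    · rw [show (N + 1) / 3 = N / 3 by omega] at hsucc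
      omega

lemma val3_rep32_two_mul_ternaryLabel_le (n : ℕ) : val3 (rep32 (2 * ternaryLabel n)) ≤ n := by
  induction n using Nat.strong_induction_on with
  | _ n ih =>
    rcases eq_or_ne (ternaryLabel n) 0 with h0 | h0
    · rw [h0, mul_zero, rep32_zero]
      exact Nat.zero_le _
    have hn0 : n ≠ 0 := by
      rintro rfl
      exact h0 ternaryLabel_zero
    have ih' := ih (n / 3) (by omega)
    rw [val3_rep32_of_ne_zero (N := 2 * ternaryLabel n) (by omega)]
    have hn := ternaryLabel_eq n
    obtain hM | hM : 2 * ternaryLabel n = 3 * ternaryLabel (n / 3) + n % 3 ∨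
        2 * ternaryLabel n + 1 = 3 * ternaryLabel (n / 3) + n % 3 := by omega
    · rw [hM, show (3 * ternaryLabel (n / 3) + n % 3) / 3 = ternaryLabel (n / 3) by omega]
      omega
    obtain hr | hr := Nat.eq_zero_or_pos (n % 3)
    · have := strictMono_val3_rep32
        (show 2 * (2 * ternaryLabel n / 3) < 2 * ternaryLabel (n / 3) by omega)
      dsimp only at this
      omega
    · rw [show 2 * ternaryLabel n / 3 = ternaryLabel (n / 3) by omega]
      omega

/-- The shapes `(δ, c) = (0, 0), (1, 0), (0, 1)` are closed under appending ternary digits; the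
shape `(0, 0)` is a progression `u < v < q` inside the fiber of `k`. -/
def NearAP (q k δ c : ℕ) : Prop :=
  ∃ u v, u < v + c ∧ ternaryLabel u = k ∧ ternaryLabel v = k + δ ∧ u + q + δ = 2 * v + c

lemma NearAP.append_digits {a k' δ' c' d k δ c : ℕ} (h : NearAP a k' δ' c') (x y : ℕ)
    (hxy : x < 3 ∧ y < 3 ∧ (3 * k' + x) / 2 = k ∧ (3 * (k' + δ') + y) / 2 = k + δ ∧
      x + d + δ + 3 * c' = 2 * y + c + 3 * δ' ∧ (c' = 0 ∨ c' = 1 ∧ x < y + c)) :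
    NearAP (3 * a + d) k δ c := by
  obtain ⟨u, v, huv, hu, hv, hsum⟩ := h
  obtain ⟨hx, hy, hk, hkδ, hdig, hlt⟩ := hxy
  refine ⟨3 * u + x, 3 * v + y, by rcases hlt with hlt | hlt <;> omega, ?_, ?_, by omega⟩
  · rw [ternaryLabel_three_mul_add u hx, hu, hk]
  · rw [ternaryLabel_three_mul_add v hy, hv, hkδ]

lemma nearAP_three_mul_add_of_digits {a d k δ c : ℕ} (x y : ℕ)
    (hxy : x < 3 ∧ y < 3 ∧ (3 * ternaryLabel a + x) / 2 = k ∧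
      (3 * ternaryLabel a + y) / 2 = k + δ ∧ x + d + δ = 2 * y + c ∧ x < y + c) :
    NearAP (3 * a + d) k δ c := by
  obtain ⟨hx, hy, hk, hkδ, hdig, hlt⟩ := hxy
  exact ⟨3 * a + x, 3 * a + y, by omega, by rw [ternaryLabel_three_mul_add a hx, hk],
    by rw [ternaryLabel_three_mul_add a hy, hkδ], by omega⟩

/- In the three tables below, the digits `x, y` are appended to a witness for `a` with label
`2 * k / 3` (or one more). In the boundary cases where that label is not below `ternaryLabel a`,
`u` and `v` are taken among `3 * a`, `3 * a + 1`, `3 * a + 2`. -/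
lemma nearAP_zero_zero_three_mul_add {a d k : ℕ} (h00 : ∀ k' < ternaryLabel a, NearAP a k' 0 0)
    (h10 : ∀ k' < ternaryLabel a, NearAP a k' 1 0) (hd : d < 3)
    (hk : k < ternaryLabel (3 * a + d)) :
    NearAP (3 * a + d) k 0 0 := by
  rw [ternaryLabel_three_mul_add a hd] at hk
  rcases (by omega : d = 0 ∨ d = 1 ∨ d = 2) with rfl | rfl | rfl <;>
    rcases (by omega : 2 * k % 3 = 0 ∨ 2 * k % 3 = 1 ∨ 2 * k % 3 = 2) with hs | hs | hs
  · exact (h00 (2 * k / 3) (by omega)).append_digits 0 0 (by omega)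
  · exact (h00 (2 * k / 3) (by omega)).append_digits 2 1 (by omega)
  · exact (h00 (2 * k / 3 + 1) (by omega)).append_digits 0 0 (by omega)
  · exact (h00 (2 * k / 3) (by omega)).append_digits 1 1 (by omega)
  · exact (h00 (2 * k / 3) (by omega)).append_digits 1 1 (by omega)
  · exact (h10 (2 * k / 3) (by omega)).append_digits 2 0 (by omega)
  · rcases (by omega : 2 * k / 3 < ternaryLabel a ∨ 2 * k = 3 * ternaryLabel a) with h | h
    · exact (h00 (2 * k / 3) h).append_digits 0 1 (by omega)
    · exact nearAP_three_mul_add_of_digits 0 1 (by omega)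
  · exact (h00 (2 * k / 3) (by omega)).append_digits 2 2 (by omega)
  · exact (h00 (2 * k / 3) (by omega)).append_digits 2 2 (by omega)

lemma nearAP_one_zero_three_mul_add {a d k : ℕ} (h00 : ∀ k' < ternaryLabel a, NearAP a k' 0 0)
    (h10 : ∀ k' < ternaryLabel a, NearAP a k' 1 0)
    (h01 : ∀ k' < ternaryLabel a, NearAP a k' 0 1)
    (hd : d < 3) (hk : k < ternaryLabel (3 * a + d)) : NearAP (3 * a + d) k 1 0 := by
  rw [ternaryLabel_three_mul_add a hd] at hk
  rcases (by omega : d = 0 ∨ d = 1 ∨ d = 2) with rfl | rfl | rfl <;>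
    rcases (by omega : 2 * k % 3 = 0 ∨ 2 * k % 3 = 1 ∨ 2 * k % 3 = 2) with hs | hs | hs
  · exact (h01 (2 * k / 3) (by omega)).append_digits 0 2 (by omega)
  · exact (h10 (2 * k / 3) (by omega)).append_digits 2 0 (by omega)
  · exact (h01 (2 * k / 3 + 1) (by omega)).append_digits 0 2 (by omega)
  · exact (h10 (2 * k / 3) (by omega)).append_digits 1 0 (by omega)
  · exact (h10 (2 * k / 3) (by omega)).append_digits 1 0 (by omega)
  · rcases (by omega : 2 * k / 3 + 1 < ternaryLabel a ∨ 2 * k + 1 = 3 * ternaryLabel a) with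
      h | h
    · exact (h00 (2 * k / 3 + 1) h).append_digits 0 1 (by omega)
    · exact nearAP_three_mul_add_of_digits 0 1 (by omega)
  · rcases (by omega : 2 * k / 3 < ternaryLabel a ∨ 2 * k = 3 * ternaryLabel a) with h | h
    · exact (h10 (2 * k / 3) h).append_digits 0 0 (by omega)
    · exact nearAP_three_mul_add_of_digits 1 2 (by omega)
  · exact (h10 (2 * k / 3) (by omega)).append_digits 2 1 (by omega)
  · exact (h10 (2 * k / 3) (by omega)).append_digits 2 1 (by omega)

lemma nearAP_zero_one_three_mul_add {a d k : ℕ} (h00 : ∀ k' < ternaryLabel a, NearAP a k' 0 0)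
    (h10 : ∀ k' < ternaryLabel a, NearAP a k' 1 0)
    (h01 : ∀ k' < ternaryLabel a, NearAP a k' 0 1)
    (hd : d < 3) (hk : k < ternaryLabel (3 * a + d)) : NearAP (3 * a + d) k 0 1 := by
  rw [ternaryLabel_three_mul_add a hd] at hk
  rcases (by omega : d = 0 ∨ d = 1 ∨ d = 2) with rfl | rfl | rfl <;>
    rcases (by omega : 2 * k % 3 = 0 ∨ 2 * k % 3 = 1 ∨ 2 * k % 3 = 2) with hs | hs | hs
  · exact (h00 (2 * k / 3) (by omega)).append_digits 1 0 (by omega)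
  · exact (h01 (2 * k / 3) (by omega)).append_digits 2 2 (by omega)
  · exact (h01 (2 * k / 3) (by omega)).append_digits 2 2 (by omega)
  · exact (h00 (2 * k / 3) (by omega)).append_digits 0 0 (by omega)
  · exact (h00 (2 * k / 3) (by omega)).append_digits 2 1 (by omega)
  · rcases (by omega : 2 * k / 3 + 1 < ternaryLabel a ∨ 2 * k + 1 = 3 * ternaryLabel a) with
      h | h
    · exact (h00 (2 * k / 3 + 1) h).append_digits 0 0 (by omega)
    · exact nearAP_three_mul_add_of_digits 0 0 (by omega)
  · rcases (by omega : 2 * k / 3 < ternaryLabel a ∨ 2 * k = 3 * ternaryLabel a) with h | h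
    · exact (h00 (2 * k / 3) h).append_digits 1 1 (by omega)
    · exact nearAP_three_mul_add_of_digits 1 1 (by omega)
  · exact (h00 (2 * k / 3) (by omega)).append_digits 1 1 (by omega)
  · exact (h10 (2 * k / 3) (by omega)).append_digits 2 0 (by omega)

theorem nearAP_of_lt_ternaryLabel (q : ℕ) :
    ∀ k < ternaryLabel q, NearAP q k 0 0 ∧ NearAP q k 1 0 ∧ NearAP q k 0 1 := by
  induction q using Nat.strong_induction_on with
  | _ q ih =>
    intro k hk
    obtain ⟨a, d, hd, rfl⟩ : ∃ a d, d < 3 ∧ q = 3 * a + d :=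
      ⟨q / 3, q % 3, Nat.mod_lt _ (by norm_num), (Nat.div_add_mod q 3).symm⟩
    have ha : a < 3 * a + d := by
      rcases Nat.eq_zero_or_pos (3 * a + d) with h0 | h0
      · simp [h0, ternaryLabel_zero] at hk
      · omega
    have h00 k' hk' := (ih a ha k' hk').1
    have h10 k' hk' := (ih a ha k' hk').2.1
    have h01 k' hk' := (ih a ha k' hk').2.2
    exact ⟨nearAP_zero_zero_three_mul_add h00 h10 hd hk,
      nearAP_one_zero_three_mul_add h00 h10 h01 hd hk,
      nearAP_zero_one_three_mul_add h00 h10 h01 hd hk⟩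

theorem stanleyLabel_eq_ternaryLabel : stanleyLabel = ternaryLabel := by
  refine stanleyLabel_eq_of_threeAPFree threeAPFree_ternaryLabel_preimage fun n k hk => ?_
  obtain ⟨u, v, huv, hu, hv, hsum⟩ := (nearAP_of_lt_ternaryLabel n k hk).1
  exact ⟨u, v, huv, by omega, hu, hv, by omega⟩

/-- For every natural number `i`, the set `S_i` of the greedy partition of the natural
numbers into 3-free sequences is nonempty and its least element equals the base-3
value of the base-3/2 representation of `2 * i`. -/
theorem stanley_cross_sequence (i : ℕ) :
    IsLeast {n : ℕ | stanleyLabel n = i} (val3 (baseThreeHalves (2 * i))) := by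
  rw [stanleyLabel_eq_ternaryLabel, val3_baseThreeHalves]
  refine ⟨?_, fun n hn => ?_⟩
  · show ternaryLabel _ = i
    rw [ternaryLabel_val3_rep32]
    omega
  · rw [← show ternaryLabel n = i from hn]
    exact val3_rep32_two_mul_ternaryLabel_le n
end

section
/- Suppose (R_i)_{i∈ℕ} is a family of pairwise disjoint sets of natural numbers whose union is all of ℕ, each R_i is 3-free, and for every i, every j < i, and every x ∈ R_i there exist a, b ∈ R_j with a < b < x and a + x = 2b (i.e., x is the last term of a nondegenerate three-term arithmetic progression whose first two terms lie in R_j). Then R_i = S_i for every i, where S_i is the i-th sequence of the greedy partition of the natural numbers into 3-free sequences. -/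
theorem stanleyLabel_eq (n : ℕ) : stanleyLabel n = sInf {i | ∀ u v : ℕ, u < v → v < n →
      stanleyLabel u = i → stanleyLabel v = i → u + n ≠ 2 * v} := by
  rw [stanleyLabel]

/-- If `(R i)` is a family of pairwise disjoint 3-free sets of natural numbers covering
`ℕ`, such that every element of `R i` is the last term of a nondegenerate three-term
arithmetic progression whose first two terms lie in `R j` for every `j < i`, then
`R i = S_i` for every `i`. -/
theorem greedy_partition_characterization (R : ℕ → Set ℕ)
    (hdisj : ∀ i j : ℕ, i ≠ j → Disjoint (R i) (R j))
    (hcover : (⋃ i : ℕ, R i) = Set.univ)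
    (hfree : ∀ i : ℕ, ∀ a ∈ R i, ∀ b ∈ R i, ∀ c ∈ R i,
      a < b → b < c → a + c ≠ 2 * b)
    (hprog : ∀ i j : ℕ, j < i → ∀ x ∈ R i, ∃ a ∈ R j, ∃ b ∈ R j,
      a < b ∧ b < x ∧ a + x = 2 * b) :
    ∀ i : ℕ, R i = {n : ℕ | stanleyLabel n = i} := by
  -- key: by strong induction, membership in R i forces label i
  have key : ∀ n : ℕ, ∀ i : ℕ, n ∈ R i → stanleyLabel n = i := by
    intro n
    induction n using Nat.strong_induction_on with
    | _ n IH =>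
      intro i hn
      -- converse for smaller numbers: label m = j → m ∈ R j
      have conv : ∀ m < n, ∀ j, stanleyLabel m = j → m ∈ R j := by
        intro m hm j hj
        have : m ∈ ⋃ k, R k := by rw [hcover]; trivial
        obtain ⟨k, hk⟩ := Set.mem_iUnion.mp this
        have := IH m hm k hk
        rwa [this.symm.trans hj] at hk
      set T := {k | ∀ u v : ℕ, u < v → v < n →
          stanleyLabel u = k → stanleyLabel v = k → u + n ≠ 2 * v} with hT
      have hiT : i ∈ T := by
        intro u v huv hvn hu hv heq
        have hu' : u ∈ R i := conv u (huv.trans hvn) i hu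
        have hv' : v ∈ R i := conv v hvn i hv
        exact hfree i u hu' v hv' n hn huv hvn heq
      have hlow : ∀ k < i, k ∉ T := by
        intro k hk hkT
        obtain ⟨a, ha, b, hb, hab, hbn, heq⟩ := hprog i k hk n hn
        exact hkT a b hab hbn (IH a (hab.trans hbn) k ha) (IH b hbn k hb) heq
      rw [stanleyLabel_eq]
      refine le_antisymm (Nat.sInf_le hiT) ?_
      by_contra h
      push_neg at h
      exact hlow _ h (Nat.sInf_mem ⟨i, hiT⟩)
  intro i
  ext n
  simp only [Set.mem_setOf_eq]
  constructor
  · exact key n i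
  · intro h
    have : n ∈ ⋃ k, R k := by rw [hcover]; trivial
    obtain ⟨k, hk⟩ := Set.mem_iUnion.mp this
    have := key n k hk
    rwa [this.symm.trans h] at hk
end

section
/- The carrying rule for adding 2 in base 3/2: for every digit string w, the base-3/2 value of addTwo(w) equals the base-3/2 value of w plus 2. -/
/-- Base-3/2 value of a digit string (most significant digit first):
`[a_n ... a_1 a_0]_{3/2} = Σ a_i (3/2)^i`. -/
def val32 (w : List Digit) : ℚ := w.foldl (fun acc d => (3 / 2 : ℚ) * acc + d.val) 0

/-- Helper for `addTwo`, acting on the reversed (least significant digit first) string: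
replace each digit `d` by `d - 1 (mod 3)` up to and including the first digit 0;
if no digit 0 occurs, a digit 0 is first prepended at the most significant end
(and then becomes 2). -/
def addTwoAux : List Digit → List Digit
  | [] => [2]
  | d :: rest => if d = 0 then (d + 2) :: rest else (d + 2) :: addTwoAux rest

/-- Adding two in base 3/2: all digits at or to the right of the rightmost 0
(including that 0) are decreased by 1 modulo 3; if there is no 0, a 0 is first
prepended. -/
def addTwo (w : List Digit) : List Digit := (addTwoAux w.reverse).reverse

/-- Value of a reversed (LSD-first) digit string. -/
def vr : List Digit → ℚ
  | [] => 0
  | d :: r => d.val + (3 / 2 : ℚ) * vr r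

lemma vr_append_singleton (l : List Digit) (d : Digit) :
    vr (l ++ [d]) = vr l + (3 / 2 : ℚ) ^ l.length * d.val := by
  induction l with
  | nil => simp [vr]
  | cons a t ih => simp [vr, ih]; ring

lemma val32_eq (w : List Digit) (acc : ℚ) :
    w.foldl (fun acc d => (3 / 2 : ℚ) * acc + d.val) acc
      = vr w.reverse + (3 / 2 : ℚ) ^ w.length * acc := by
  induction w generalizing acc with
  | nil => simp [vr]
  | cons d t ih =>
      simp only [List.foldl_cons, ih, List.reverse_cons, vr_append_singleton,
        List.length_reverse, List.length_cons]
      ring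

lemma vr_addTwoAux (l : List Digit) : vr (addTwoAux l) = vr l + 2 := by
  induction l with
  | nil => simp [addTwoAux, vr]
  | cons d rest ih =>
      by_cases h : d = 0
      · subst h; simp [addTwoAux, vr]; ring
      · fin_cases d
        · simp at h
        · simp [addTwoAux, vr, ih]; ring
        · simp [addTwoAux, vr, ih]
          norm_num
          ring

/-- The carrying rule: adding two to a digit string in base 3/2 increases its
base-3/2 value by exactly 2. -/
theorem addTwo_val32 (w : List Digit) : val32 (addTwo w) = val32 w + 2 := by
  simp only [val32, addTwo, val32_eq, List.reverse_reverse, mul_zero, add_zero]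
  exact vr_addTwoAux w.reverse
end
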